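/- arXiv:1511.07595 — 4 statements merged into one kernel-verified Lean document; each statement's English description precedes it below -/
import Mathlib

section
/- Let g: ℝⁿ → (-∞, ∞] be a proper lower semicontinuous convex function that is coercive (i.e., g(x)/‖x‖ → ∞ as ‖x‖ → ∞). Then the set ⋃_{x ∈ ℝⁿ} ∂g(x) is closed in ℝⁿ. -/
noncomputable section

/-- `ℝⁿ`. -/
abbrev E (n : ℕ) := EuclideanSpace ℝ (Fin n)

/-- Convex subdifferential of an extended-real-valued function. -/
def subdiffE {n : ℕ} (g : E n → EReal) (x : E n) : Set (E n) :=
  {v | ∀ y, ((inner ℝ v (y - x) : ℝ) : EReal) + g x ≤ g y}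

/-- Convexity for extended-real-valued functions. -/
def ConvexE {n : ℕ} (g : E n → EReal) : Prop :=
  ∀ x y : E n, ∀ t : ℝ, 0 ≤ t → t ≤ 1 →
    g (t • x + (1 - t) • y) ≤ (t : EReal) * g x + ((1 - t : ℝ) : EReal) * g y

/-- Coercivity: `g(x)/‖x‖ → ∞` as `‖x‖ → ∞`. -/
def CoerciveE {n : ℕ} (g : E n → EReal) : Prop :=
  ∀ c : ℝ, ∃ R : ℝ, ∀ x : E n, R ≤ ‖x‖ → ((c * ‖x‖ : ℝ) : EReal) ≤ g x

/-!
Every `v` is a subgradient somewhere, so the union of the subdifferentials is all of `ℝⁿ`.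
Indeed the tilted function `x ↦ g x - ⟪v, x⟫` is lower semicontinuous and, by coercivity, at
least `‖x‖` far out; hence it attains a global minimum at some `z`, and minimality of
`g - ⟪v, ·⟫` at `z` is exactly `v ∈ ∂g(z)`.
-/

open Set Filter

theorem LowerSemicontinuous.exists_forall_le' {α β : Type*} [TopologicalSpace α]
    [LinearOrder β] {f : α → β} (hf : LowerSemicontinuous f) (x₀ : α)
    (h : ∀ᶠ x in cocompact α, f x₀ ≤ f x) : ∃ x, ∀ y, f x ≤ f y := by
  obtain ⟨K, hK, hKf⟩ := hasBasis_cocompact.eventually_iff.1 h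
  obtain ⟨x, -, hx⟩ := LowerSemicontinuousOn.exists_isMinOn (insert_nonempty x₀ K)
    (hK.insert x₀) (hf.lowerSemicontinuousOn _)
  refine ⟨x, fun y => ?_⟩
  by_cases hyK : y ∈ K
  exacts [hx (mem_insert_of_mem _ hyK), (hx (mem_insert x₀ K)).trans (hKf hyK)]

theorem LowerSemicontinuous.add_coe {α : Type*} [TopologicalSpace α] {f : α → EReal}
    {φ : α → ℝ} (hf : LowerSemicontinuous f) (hφ : Continuous φ) :
    LowerSemicontinuous fun x => f x + (φ x : EReal) :=
  hf.add' (continuous_coe_real_ereal.comp hφ).lowerSemicontinuous fun _ =>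
    EReal.continuousAt_add (Or.inr (EReal.coe_ne_bot _)) (Or.inr (EReal.coe_ne_top _))

variable {n : ℕ} {g : E n → EReal}

theorem mem_subdiffE_of_forall_le {v z : E n}
    (hz : ∀ y, g z + ((-inner ℝ v z : ℝ) : EReal) ≤ g y + ((-inner ℝ v y : ℝ) : EReal)) :
    v ∈ subdiffE g z := fun y =>
  calc ((inner ℝ v (y - z) : ℝ) : EReal) + g z
      = g z + ((-inner ℝ v z : ℝ) : EReal) + ((inner ℝ v y : ℝ) : EReal) := by
        rw [inner_sub_right, add_assoc, ← EReal.coe_add, add_comm]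
        ring_nf
    _ ≤ g y + ((-inner ℝ v y : ℝ) : EReal) + ((inner ℝ v y : ℝ) : EReal) :=
        add_le_add_left (hz y) _
    _ = g y := by
        rw [add_assoc, ← EReal.coe_add, neg_add_cancel, EReal.coe_zero, add_zero]

theorem CoerciveE.eventually_norm_le_sub_inner (hg : CoerciveE g) (v : E n) :
    ∀ᶠ x in cocompact (E n), ((‖x‖ : ℝ) : EReal) ≤ g x + ((-inner ℝ v x : ℝ) : EReal) := by
  obtain ⟨R, hR⟩ := hg (‖v‖ + 1)
  filter_upwards [tendsto_norm_cocompact_atTop.eventually_ge_atTop R] with x hx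
  calc ((‖x‖ : ℝ) : EReal)
      ≤ (((‖v‖ + 1) * ‖x‖ : ℝ) : EReal) + ((-inner ℝ v x : ℝ) : EReal) := by
        rw [← EReal.coe_add, EReal.coe_le_coe_iff]
        nlinarith [real_inner_le_norm v x]
    _ ≤ g x + ((-inner ℝ v x : ℝ) : EReal) := by
        gcongr
        exact hR x hx

theorem CoerciveE.exists_mem_subdiffE (hg : CoerciveE g) (hlsc : LowerSemicontinuous g)
    (hp : ∃ x, g x ≠ ⊤) (v : E n) : ∃ z, v ∈ subdiffE g z := by
  obtain ⟨x₀, hx₀⟩ := hp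
  set f : E n → EReal := fun x => g x + ((-inner ℝ v x : ℝ) : EReal)
  have hf : LowerSemicontinuous f := hlsc.add_coe (continuous_const.inner continuous_id).neg
  have hfx₀ : f x₀ ≠ ⊤ := EReal.add_ne_top hx₀ (EReal.coe_ne_top _)
  have hfar : ∀ᶠ x in cocompact (E n), f x₀ ≤ f x := by
    filter_upwards [hg.eventually_norm_le_sub_inner v,
      tendsto_norm_cocompact_atTop.eventually_ge_atTop (f x₀).toReal] with x hx hnorm
    exact (EReal.le_coe_toReal hfx₀).trans ((EReal.coe_le_coe_iff.2 hnorm).trans hx)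
  obtain ⟨z, hz⟩ := hf.exists_forall_le' x₀ hfar
  exact ⟨z, mem_subdiffE_of_forall_le hz⟩

theorem subdiff_range_closed_general {n : ℕ} (g : E n → EReal)
    (hp : ∃ x, g x ≠ ⊤)
    (hlsc : LowerSemicontinuous g)
    (hcoer : CoerciveE g) :
    IsClosed (⋃ x, subdiffE g x) := by
  rw [iUnion_eq_univ_iff.2 (hcoer.exists_mem_subdiffE hlsc hp)]
  exact isClosed_univ

theorem subdiff_range_closed {n : ℕ} (g : E n → EReal)
    (hnb : ∀ x, g x ≠ ⊥) (hp : ∃ x, g x ≠ ⊤)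
    (hlsc : LowerSemicontinuous g) (hconv : ConvexE g)
    (hcoer : CoerciveE g) :
    IsClosed (⋃ x, subdiffE g x) :=
  subdiff_range_closed_general g hp hlsc hcoer
end
end

section
/- Let f = g - h where g is γ₁-convex and h is γ₂-convex on ℝⁿ (with g proper and h real-valued). Let sequences {x_k}, {y_k} satisfy y_k ∈ ∂h(x_k) and x_{k+1} ∈ ∂g*(y_k) for all k. Then f(x_k) - f(x_{k+1}) ≥ ((γ₁+γ₂)/2)‖x_{k+1} - x_k‖² for all k; in particular {f(x_k)} is nonincreasing. -/
noncomputable section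

/-- Convex subdifferential of a real-valued function. -/
def subdiffR {n : ℕ} (h : E n → ℝ) (x : E n) : Set (E n) :=
  {w | ∀ y, (inner ℝ w (y - x) : ℝ) ≤ h y - h x}

/-- Fenchel conjugate. -/
def fconj {n : ℕ} (g : E n → EReal) (y : E n) : EReal :=
  ⨆ x, (((inner ℝ y x : ℝ) : EReal) - g x)

/-- `γ`-convexity for extended-real-valued functions. -/
def GammaConvexE {n : ℕ} (g : E n → EReal) (γ : ℝ) : Prop :=
  ConvexE (fun x => g x - ((γ / 2 * ‖x‖ ^ 2 : ℝ) : EReal))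

/-! Since `g` is proper, lower semicontinuous and convex, every point strictly below its graph lies
strictly below some affine minorant: separate it from the closed convex epigraph in `ℝⁿ × ℝ`, and
if the separating hyperplane is vertical, tilt a nonvertical minorant along it. Hence
`x_{k+1} ∈ ∂g*(y_k)` forces `g x_{k+1} ≤ ⟪y_k, x_{k+1}⟫ - g* y_k`, i.e. `y_k ∈ ∂g(x_{k+1})`.

For a `γ`-convex `φ`, a subgradient `v` at `x` satisfies `φ z ≥ φ x + ⟪v, z - x⟫ + γ/2 ‖z - x‖²`:
compare the subgradient inequality with `γ`-convexity at `x + t (z - x)` and let `t → 0⁺`. Adding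
this for `g` at `x_{k+1}` and for `h` at `x_k`, both with `v = y_k`, the inner products cancel. -/

open Set Filter Topology
open scoped RealInnerProductSpace

section StrongConvexity

variable {F : Type*} [NormedAddCommGroup F] [InnerProductSpace ℝ F] {s : Set F} {m : ℝ}
  {f : F → ℝ}

theorem StrongConvexOn.add_inner_add_sq_le (hf : StrongConvexOn s m f) {x z v : F}
    (hx : x ∈ s) (hz : z ∈ s) (hv : ∀ y ∈ s, ⟪v, y - x⟫ ≤ f y - f x) :
    f x + ⟪v, z - x⟫ + m / 2 * ‖z - x‖ ^ 2 ≤ f z := by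
  have hsegment : ∀ t ∈ Ioo (0 : ℝ) 1,
      ⟪v, z - x⟫ ≤ f z - f x - (1 - t) * (m / 2 * ‖z - x‖ ^ 2) := by
    rintro t ⟨ht₀, ht₁⟩
    have hmem := hf.1 hz hx ht₀.le (sub_nonneg.2 ht₁.le) (add_sub_cancel t 1)
    have hconv := hf.2 hz hx ht₀.le (sub_nonneg.2 ht₁.le) (add_sub_cancel t 1)
    have hsub := hv _ hmem
    rw [show t • z + (1 - t) • x - x = t • (z - x) by module, inner_smul_right] at hsub
    simp only [smul_eq_mul] at hconv
    refine le_of_mul_le_mul_left ?_ ht₀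
    linarith
  have hlim : Tendsto (fun t => f z - f x - (1 - t) * (m / 2 * ‖z - x‖ ^ 2)) (𝓝[>] 0)
      (𝓝 (f z - f x - m / 2 * ‖z - x‖ ^ 2)) := by
    have hcont : Continuous fun t : ℝ => f z - f x - (1 - t) * (m / 2 * ‖z - x‖ ^ 2) := by
      fun_prop
    simpa using (hcont.tendsto 0).mono_left nhdsWithin_le_nhds
  have := ge_of_tendsto hlim (eventually_of_mem (Ioo_mem_nhdsGT one_pos) hsegment)
  linarith

end StrongConvexity

section Epigraph

variable {α : Type*} {g : α → EReal}

def epigraph (g : α → EReal) : Set (α × ℝ) := {p | g p.1 ≤ p.2}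

theorem LowerSemicontinuous.isClosed_epigraph_real [TopologicalSpace α]
    (hg : LowerSemicontinuous g) : IsClosed (epigraph g) :=
  hg.isClosed_epigraph.preimage
    (continuous_fst.prodMk (continuous_coe_real_ereal.comp continuous_snd))

theorem ConvexOn.convex_epigraph_of_toReal [AddCommGroup α] [Module ℝ α] (hnb : ∀ x, g x ≠ ⊥)
    (hg : ConvexOn ℝ {x | g x ≠ ⊤} fun x => (g x).toReal) : Convex ℝ (epigraph g) := by
  convert hg.convex_epigraph using 1
  ext ⟨x, r⟩
  have := hnb x
  show g x ≤ r ↔ g x ≠ ⊤ ∧ (g x).toReal ≤ r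
  generalize g x = a at this ⊢
  induction a using EReal.rec <;> simp_all

end Epigraph

section AffineMinorant

variable {F : Type*} [NormedAddCommGroup F] [InnerProductSpace ℝ F] {g : F → EReal}

def IsAffineMinorant (g : F → EReal) (w : F) (β : ℝ) : Prop :=
  ∀ z, ((⟪w, z⟫ - β : ℝ) : EReal) ≤ g z

theorem IsAffineMinorant.add_smul {w₀ w : F} {β₀ u m : ℝ} (h₀ : IsAffineMinorant g w₀ β₀)
    (hm : 0 ≤ m) (hw : ∀ z, g z ≠ ⊤ → ⟪w, z⟫ ≤ u) :
    IsAffineMinorant g (w₀ + m • w) (β₀ + m * u) := by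
  intro z
  rcases eq_or_ne (g z) ⊤ with hz | hz
  · simp [hz]
  refine le_trans (EReal.coe_le_coe_iff.2 ?_) (h₀ z)
  rw [inner_add_left, real_inner_smul_left]
  linarith [mul_le_mul_of_nonneg_left (hw z hz) hm]

theorem isAffineMinorant_of_inner_add_mul_lt (hnb : ∀ x, g x ≠ ⊥) {w : F} {b u : ℝ}
    (hb : b < 0) (hsep : ∀ q ∈ epigraph g, ⟪w, q.1⟫ + b * q.2 < u) :
    IsAffineMinorant g ((-b)⁻¹ • w) (u / -b) := by
  intro z
  rcases eq_or_ne (g z) ⊤ with hz | hz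
  · simp [hz]
  have hzr := EReal.coe_toReal hz (hnb z)
  have := hsep (z, (g z).toReal) hzr.ge
  rw [← hzr, EReal.coe_le_coe_iff, real_inner_smul_left, inv_mul_eq_div, ← sub_div,
    div_le_iff₀ (neg_pos.2 hb)]
  linarith

variable [CompleteSpace F]

theorem exists_inner_add_mul_lt_of_notMem {S : Set (F × ℝ)} (hconv : Convex ℝ S)
    (hclosed : IsClosed S) {p : F × ℝ} (hp : p ∉ S) :
    ∃ (w : F) (b u : ℝ), (∀ q ∈ S, ⟪w, q.1⟫ + b * q.2 < u) ∧ u < ⟪w, p.1⟫ + b * p.2 := by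
  obtain ⟨f, u, hfS, hfp⟩ := geometric_hahn_banach_closed_point hconv hclosed hp
  set w := (InnerProductSpace.toDual ℝ F).symm (f.comp (.inl ℝ F ℝ))
  have hf : ∀ q : F × ℝ, f q = ⟪w, q.1⟫ + f (0, 1) * q.2 := by
    rintro ⟨z, r⟩
    have : ((z, r) : F × ℝ) = (z, 0) + r • (0, 1) := by ext <;> simp
    rw [this, map_add, map_smul, smul_eq_mul, InnerProductSpace.toDual_symm_apply]
    simp [mul_comm]
  exact ⟨w, f (0, 1), u, fun q hq => hf q ▸ hfS q hq, hf p ▸ hfp⟩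

theorem exists_isAffineMinorant (hnb : ∀ x, g x ≠ ⊥) {x₀ : F} (hx₀ : g x₀ ≠ ⊤)
    (hconv : Convex ℝ (epigraph g)) (hclosed : IsClosed (epigraph g)) :
    ∃ w β, IsAffineMinorant g w β := by
  obtain ⟨a, ha⟩ : ∃ a : ℝ, g x₀ = a := ⟨_, (EReal.coe_toReal hx₀ (hnb x₀)).symm⟩
  obtain ⟨w, b, u, hS, hp⟩ := exists_inner_add_mul_lt_of_notMem hconv hclosed
    (p := (x₀, a - 1)) (by
      show ¬ g x₀ ≤ ((a - 1 : ℝ) : EReal)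
      rw [ha, EReal.coe_le_coe_iff]
      linarith)
  have hb : b < 0 := by linarith [hS (x₀, a) ha.le]
  exact ⟨_, _, isAffineMinorant_of_inner_add_mul_lt hnb hb hS⟩

theorem exists_isAffineMinorant_of_lt (hnb : ∀ x, g x ≠ ⊥) {x₀ : F} (hx₀ : g x₀ ≠ ⊤)
    (hconv : Convex ℝ (epigraph g)) (hclosed : IsClosed (epigraph g)) {v : F} {c : ℝ}
    (hc : (c : EReal) < g v) :
    ∃ w β, IsAffineMinorant g w β ∧ c < ⟪w, v⟫ - β := by
  obtain ⟨w, b, u, hS, hv⟩ := exists_inner_add_mul_lt_of_notMem hconv hclosed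
    (p := (v, c)) (not_le.2 hc)
  have hb : b ≤ 0 := by
    by_contra! hb
    obtain ⟨a, ha⟩ : ∃ a : ℝ, g x₀ = a := ⟨_, (EReal.coe_toReal hx₀ (hnb x₀)).symm⟩
    set r := |u - ⟪w, x₀⟫ - b * a| / b
    have hmem : (x₀, a + r) ∈ epigraph g := by
      show g x₀ ≤ ((a + r : ℝ) : EReal)
      rw [ha, EReal.coe_le_coe_iff]
      linarith [show 0 ≤ r by positivity]
    have := hS _ hmem
    rw [mul_add, mul_div_cancel₀ _ hb.ne'] at this
    linarith [le_abs_self (u - ⟪w, x₀⟫ - b * a)]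
  rcases hb.lt_or_eq with hb | rfl
  · refine ⟨_, _, isAffineMinorant_of_inner_add_mul_lt hnb hb hS, ?_⟩
    rw [real_inner_smul_left, inv_mul_eq_div, ← sub_div, lt_div_iff₀ (neg_pos.2 hb)]
    linarith
  -- A vertical hyperplane separates `(v, c)`: tilt a given minorant along it.
  simp only [zero_mul, add_zero] at hS hv
  obtain ⟨w₀, β₀, h₀⟩ := exists_isAffineMinorant hnb hx₀ hconv hclosed
  set m := max 0 ((c - (⟪w₀, v⟫ - β₀) + 1) / (⟪w, v⟫ - u))
  have hdom : ∀ z, g z ≠ ⊤ → ⟪w, z⟫ ≤ u := fun z hz =>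
    (hS (z, (g z).toReal) (EReal.coe_toReal hz (hnb z)).ge).le
  refine ⟨w₀ + m • w, β₀ + m * u, h₀.add_smul (le_max_left _ _) hdom, ?_⟩
  have hm : c - (⟪w₀, v⟫ - β₀) + 1 ≤ m * (⟪w, v⟫ - u) :=
    (div_le_iff₀ (sub_pos.2 hv)).1 (le_max_right _ _)
  rw [inner_add_left, real_inner_smul_left]
  linarith

end AffineMinorant

section Conjugate

variable {n : ℕ} {g : E n → EReal}

theorem inner_sub_le_fconj (y z : E n) : ((⟪y, z⟫ : ℝ) : EReal) - g z ≤ fconj g y :=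
  le_iSup (fun x => ((⟪y, x⟫ : ℝ) : EReal) - g x) z

theorem IsAffineMinorant.fconj_le {w : E n} {β : ℝ} (h : IsAffineMinorant g w β) :
    fconj g w ≤ β := by
  refine iSup_le fun z => ?_
  have hz := h z
  generalize g z = a at hz ⊢
  induction a using EReal.rec with
  | bot => exact absurd (le_bot_iff.1 hz) (EReal.coe_ne_bot _)
  | coe a =>
    rw [← EReal.coe_sub, EReal.coe_le_coe_iff] at *
    linarith
  | top => simp

theorem mem_subdiffE_of_mem_subdiffE_fconj (hnb : ∀ x, g x ≠ ⊥) (hp : ∃ x, g x ≠ ⊤)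
    (hlsc : LowerSemicontinuous g) (hg : ConvexOn ℝ {x | g x ≠ ⊤} fun x => (g x).toReal)
    {x y : E n} (hx : x ∈ subdiffE (fconj g) y) : g x ≠ ⊤ ∧ y ∈ subdiffE g x := by
  obtain ⟨x₀, hx₀⟩ := hp
  have hconv := hg.convex_epigraph_of_toReal hnb
  have hclosed := hlsc.isClosed_epigraph_real
  obtain ⟨w₀, β₀, h₀⟩ := exists_isAffineMinorant hnb hx₀ hconv hclosed
  have hne_bot : fconj g y ≠ ⊥ := by
    refine ne_bot_of_le_ne_bot ?_ (inner_sub_le_fconj y x₀)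
    rw [← EReal.coe_toReal hx₀ (hnb x₀), ← EReal.coe_sub]
    exact EReal.coe_ne_bot _
  have hne_top : fconj g y ≠ ⊤ := by
    intro htop
    have := (hx w₀).trans h₀.fconj_le
    simp [htop] at this
  obtain ⟨s, hs⟩ : ∃ s : ℝ, fconj g y = s := ⟨_, (EReal.coe_toReal hne_top hne_bot).symm⟩
  have hle : g x ≤ ((⟪y, x⟫ - s : ℝ) : EReal) := by
    by_contra! hlt
    obtain ⟨w, β, hwβ, hlt'⟩ := exists_isAffineMinorant_of_lt hnb hx₀ hconv hclosed hlt
    have := (hx w).trans hwβ.fconj_le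
    rw [hs, ← EReal.coe_add, EReal.coe_le_coe_iff, inner_sub_right, real_inner_comm w x,
      real_inner_comm y x] at this
    linarith
  have hx_top : g x ≠ ⊤ := ne_top_of_le_ne_top (EReal.coe_ne_top _) hle
  refine ⟨hx_top, fun z => ?_⟩
  rcases eq_or_ne (g z) ⊤ with hz | hz
  · simp [hz]
  have hyoung := inner_sub_le_fconj (g := g) y z
  rw [hs, ← EReal.coe_toReal hz (hnb z), ← EReal.coe_sub, EReal.coe_le_coe_iff] at hyoung
  rw [← EReal.coe_toReal hx_top (hnb x), EReal.coe_le_coe_iff] at hle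
  rw [← EReal.coe_toReal hz (hnb z), ← EReal.coe_toReal hx_top (hnb x), ← EReal.coe_add,
    EReal.coe_le_coe_iff, inner_sub_right]
  linarith

end Conjugate

section GammaConvex

variable {n : ℕ} {g : E n → EReal} {γ : ℝ}

theorem GammaConvexE.strongConvexOn_toReal (hg : GammaConvexE g γ) (hnb : ∀ x, g x ≠ ⊥) :
    StrongConvexOn {x | g x ≠ ⊤} γ fun x => (g x).toReal := by
  have hcomb : ∀ x y, g x ≠ ⊤ → g y ≠ ⊤ → ∀ a b : ℝ, 0 ≤ a → 0 ≤ b → a + b = 1 →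
      g (a • x + b • y) ≤ ((a * ((g x).toReal - γ / 2 * ‖x‖ ^ 2)
        + b * ((g y).toReal - γ / 2 * ‖y‖ ^ 2) + γ / 2 * ‖a • x + b • y‖ ^ 2 : ℝ) : EReal) := by
    intro x y hx hy a b ha hb hab
    obtain rfl := eq_sub_of_add_eq' hab
    have := hg x y a ha (by linarith)
    dsimp only at this
    rw [← EReal.coe_toReal hx (hnb x), ← EReal.coe_toReal hy (hnb y), ← EReal.coe_sub,
      ← EReal.coe_sub, ← EReal.coe_mul, ← EReal.coe_mul, ← EReal.coe_add,
      EReal.sub_le_iff_le_add (.inl (EReal.coe_ne_bot _)) (.inl (EReal.coe_ne_top _))] at this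
    rwa [EReal.coe_add]
  rw [strongConvexOn_iff_convex]
  refine ⟨fun x hx y hy a b ha hb hab => ?_, fun x hx y hy a b ha hb hab => ?_⟩
  · exact ne_top_of_le_ne_top (EReal.coe_ne_top _) (hcomb x y hx hy a b ha hb hab)
  · have h := hcomb x y hx hy a b ha hb hab
    rw [← EReal.coe_toReal (ne_top_of_le_ne_top (EReal.coe_ne_top _) h) (hnb _),
      EReal.coe_le_coe_iff] at h
    simp only [smul_eq_mul]
    linarith

theorem GammaConvexE.toReal_add_inner_add_sq_le (hg : GammaConvexE g γ) (hnb : ∀ x, g x ≠ ⊥)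
    {x z v : E n} (hx : g x ≠ ⊤) (hz : g z ≠ ⊤) (hv : v ∈ subdiffE g x) :
    (g x).toReal + ⟪v, z - x⟫ + γ / 2 * ‖z - x‖ ^ 2 ≤ (g z).toReal :=
  (hg.strongConvexOn_toReal hnb).add_inner_add_sq_le hx hz fun y hy => by
    have := hv y
    rw [← EReal.coe_toReal hx (hnb x), ← EReal.coe_toReal hy (hnb y), ← EReal.coe_add,
      EReal.coe_le_coe_iff] at this
    linarith

end GammaConvex

theorem dca_decrease {n : ℕ} (g : E n → EReal) (h : E n → ℝ) (γ₁ γ₂ : ℝ)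
    (hγ₁ : 0 ≤ γ₁) (hγ₂ : 0 ≤ γ₂)
    (hnb : ∀ x, g x ≠ ⊥) (hp : ∃ x, g x ≠ ⊤) (hglsc : LowerSemicontinuous g)
    (hg : GammaConvexE g γ₁)
    (hh : ConvexOn ℝ Set.univ (fun x => h x - γ₂ / 2 * ‖x‖ ^ 2))
    (x y : ℕ → E n)
    (hy : ∀ k, y k ∈ subdiffR h (x k))
    (hx : ∀ k, x (k + 1) ∈ subdiffE (fconj g) (y k)) :
    (∀ k, (((γ₁ + γ₂) / 2 * ‖x (k + 1) - x k‖ ^ 2 : ℝ) : EReal) ≤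
        (g (x k) - (h (x k) : EReal)) - (g (x (k + 1)) - (h (x (k + 1)) : EReal))) ∧
      ∀ k, (g (x (k + 1)) - (h (x (k + 1)) : EReal)) ≤ g (x k) - (h (x k) : EReal) := by
  have hgc : ConvexOn ℝ {x | g x ≠ ⊤} fun x => (g x).toReal :=
    UniformConvexOn.convexOn (hg.strongConvexOn_toReal hnb) fun r => by positivity
  have hhs : StrongConvexOn univ γ₂ h := strongConvexOn_iff_convex.2 hh
  refine forall_and.1 fun k => ?_
  obtain ⟨hnext, hyk⟩ := mem_subdiffE_of_mem_subdiffE_fconj hnb hp hglsc hgc (hx k)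
  rw [← EReal.coe_toReal hnext (hnb _)]
  rcases eq_or_ne (g (x k)) ⊤ with hcur | hcur
  · simp [hcur, ← EReal.coe_sub]
  have hgk := hg.toReal_add_inner_add_sq_le hnb hnext hcur hyk
  have hhk := hhs.add_inner_add_sq_le (z := x (k + 1)) (mem_univ _) (mem_univ _)
    fun z _ => hy k z
  rw [← EReal.coe_toReal hcur (hnb _)]
  simp only [← EReal.coe_sub, EReal.coe_le_coe_iff]
  rw [norm_sub_rev, inner_sub_right] at hgk
  rw [inner_sub_right] at hhk
  have hgap : 0 ≤ (γ₁ + γ₂) / 2 * ‖x (k + 1) - x k‖ ^ 2 := by positivity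
  constructor <;> linarith
end
end

section
/- Let F ⊂ ℝⁿ be closed bounded convex with 0 in its interior, a¹,...,aᵐ ∈ ℝⁿ, index sets I, J with positive weights αᵢ (i ∈ I) and βⱼ (j ∈ J), and let γ₁ = sup{r > 0 : B(0;r) ⊂ F}, γ₂ = inf{r > 0 : F ⊂ B(0;r)}. If γ₁ Σ_{i∈I} αᵢ > γ₂ Σ_{j∈J} βⱼ, then the function f(x) = Σ_{i∈I} αᵢ ρ_F(x - aⁱ) - Σ_{j∈J} βⱼ ρ_F(x - aʲ) is coercive (f(x) → ∞ as ‖x‖ → ∞) and attains a global minimum on ℝⁿ. -/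
noncomputable section

theorem fermat_torricelli_existence {n : ℕ} {ι : Type} (F : Set (E n))
    (hne : F.Nonempty) (hcl : IsClosed F) (hbd : Bornology.IsBounded F)
    (hcv : Convex ℝ F) (h0 : (0 : E n) ∈ interior F)
    (I J : Finset ι) (a : ι → E n) (α β : ι → ℝ)
    (hα : ∀ i ∈ I, 0 < α i) (hβ : ∀ j ∈ J, 0 < β j)
    (γ₁ γ₂ : ℝ)
    (hγ₁ : γ₁ = sSup {r : ℝ | 0 < r ∧ Metric.closedBall (0 : E n) r ⊆ F})
    (hγ₂ : γ₂ = sInf {r : ℝ | 0 < r ∧ F ⊆ Metric.closedBall (0 : E n) r})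
    (hdom : γ₂ * (∑ j ∈ J, β j) < γ₁ * (∑ i ∈ I, α i))
    (f : E n → ℝ)
    (hf : f = fun x => ∑ i ∈ I, α i * gauge F (x - a i) - ∑ j ∈ J, β j * gauge F (x - a j)) :
    (∀ M : ℝ, ∃ R : ℝ, ∀ x : E n, R ≤ ‖x‖ → M ≤ f x) ∧
      ∃ xstar : E n, ∀ x : E n, f xstar ≤ f x := by
  rcases subsingleton_or_nontrivial (E n) with hsub | hnt
  · constructor
    · intro M
      refine ⟨1, fun x hx => ?_⟩
      have : x = 0 := Subsingleton.elim x 0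
      rw [this, norm_zero] at hx
      linarith
    · exact ⟨0, fun x => by rw [Subsingleton.elim x 0]⟩
  -- basic setup
  have hmem : F ∈ nhds (0 : E n) := mem_interior_iff_mem_nhds.mp h0
  obtain ⟨ε, hε, hball⟩ := Metric.mem_nhds_iff.mp hmem
  have hεhalf : (0 : ℝ) < ε / 2 := by linarith
  have hcbε : Metric.closedBall (0 : E n) (ε / 2) ⊆ F :=
    subset_trans (Metric.closedBall_subset_ball (by linarith)) hball
  obtain ⟨Rb, hFRb⟩ := hbd.subset_closedBall (0 : E n)
  set S₁ : Set ℝ := {r : ℝ | 0 < r ∧ Metric.closedBall (0 : E n) r ⊆ F} with hS₁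
  set S₂ : Set ℝ := {r : ℝ | 0 < r ∧ F ⊆ Metric.closedBall (0 : E n) r} with hS₂
  have hS₁ne : S₁.Nonempty := ⟨ε / 2, hεhalf, hcbε⟩
  have hS₁bdd : BddAbove S₁ := by
    refine ⟨Rb, fun r hr => ?_⟩
    obtain ⟨x, hx⟩ := exists_norm_eq (E n) hr.1.le
    have hxF : x ∈ F := hr.2 (by simp [Metric.mem_closedBall, dist_eq_norm, hx])
    have := hFRb hxF
    rw [Metric.mem_closedBall, dist_zero_right, hx] at this
    exact this
  have hRb' : (0:ℝ) < max Rb 1 := lt_of_lt_of_le one_pos (le_max_right _ _)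
  have hS₂ne : S₂.Nonempty :=
    ⟨max Rb 1, hRb', hFRb.trans (Metric.closedBall_subset_closedBall (le_max_left _ _))⟩
  have hγ₁pos : 0 < γ₁ := by
    rw [hγ₁]
    exact lt_of_lt_of_le hεhalf (le_csSup hS₁bdd ⟨hεhalf, hcbε⟩)
  have hγ₂lb : ε / 2 ≤ γ₂ := by
    rw [hγ₂]
    refine le_csInf hS₂ne fun r hr => ?_
    obtain ⟨x, hx⟩ := exists_norm_eq (E n) hεhalf.le
    have hxF : x ∈ F := hcbε (by simp [Metric.mem_closedBall, dist_eq_norm, hx])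
    have := hr.2 hxF
    rw [Metric.mem_closedBall, dist_zero_right, hx] at this
    exact this
  have hγ₂pos : 0 < γ₂ := lt_of_lt_of_le hεhalf hγ₂lb
  have habs : Absorbent ℝ F := absorbent_nhds_zero hmem
  have hvnb : Bornology.IsVonNBounded ℝ F := NormedSpace.isVonNBounded_of_isBounded ℝ hbd
  -- key gauge bounds
  have lem1 : ∀ x : E n, γ₁ * gauge F x ≤ ‖x‖ := by
    intro x
    rcases eq_or_lt_of_le (gauge_nonneg x : (0:ℝ) ≤ gauge F x) with hg | hg
    · rw [← hg, mul_zero]; exact norm_nonneg x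
    · rw [← le_div_iff₀ hg, hγ₁]
      refine Real.sSup_le (fun r hr => ?_) (div_nonneg (norm_nonneg x) hg.le)
      rw [le_div_iff₀ hg]
      exact mul_gauge_le_norm (Metric.ball_subset_closedBall.trans hr.2)
  have lem2 : ∀ x : E n, ‖x‖ ≤ γ₂ * gauge F x := by
    intro x
    rcases eq_or_lt_of_le (gauge_nonneg x : (0:ℝ) ≤ gauge F x) with hg | hg
    · have hx0 : x = 0 := (gauge_eq_zero habs hvnb).mp hg.symm
      simp [hx0]
    · rw [← div_le_iff₀ hg]
      rw [hγ₂]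
      refine le_csInf hS₂ne fun r hr => ?_
      rw [div_le_iff₀ hg]
      calc ‖x‖ = (‖x‖ / r) * r := (div_mul_cancel₀ _ hr.1.ne').symm
        _ ≤ gauge F x * r := by
            apply mul_le_mul_of_nonneg_right _ hr.1.le
            exact le_gauge_of_subset_closedBall habs hr.1.le hr.2
        _ = r * gauge F x := mul_comm _ _
  -- constants
  set A : ℝ := ∑ i ∈ I, α i with hA
  set B : ℝ := ∑ j ∈ J, β j with hB
  set c : ℝ := A / γ₂ - B / γ₁ with hc
  set C : ℝ := (∑ i ∈ I, α i * ‖a i‖) / γ₂ + (∑ j ∈ J, β j * ‖a j‖) / γ₁ with hC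
  have hcpos : 0 < c := by
    rw [hc, sub_pos, div_lt_div_iff₀ hγ₁pos hγ₂pos]
    linarith [hdom]
  -- main lower bound
  have hmain : ∀ x : E n, c * ‖x‖ - C ≤ f x := by
    intro x
    have h1 : ∑ i ∈ I, α i * ((‖x‖ - ‖a i‖) / γ₂) ≤ ∑ i ∈ I, α i * gauge F (x - a i) := by
      refine Finset.sum_le_sum fun i hi => ?_
      refine mul_le_mul_of_nonneg_left ?_ (hα i hi).le
      rw [div_le_iff₀ hγ₂pos]
      calc ‖x‖ - ‖a i‖ ≤ ‖x - a i‖ := norm_sub_norm_le x (a i)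
        _ ≤ γ₂ * gauge F (x - a i) := lem2 _
        _ = gauge F (x - a i) * γ₂ := mul_comm _ _
    have h2 : ∑ j ∈ J, β j * gauge F (x - a j) ≤ ∑ j ∈ J, β j * ((‖x‖ + ‖a j‖) / γ₁) := by
      refine Finset.sum_le_sum fun j hj => ?_
      refine mul_le_mul_of_nonneg_left ?_ (hβ j hj).le
      rw [le_div_iff₀ hγ₁pos]
      calc gauge F (x - a j) * γ₁ = γ₁ * gauge F (x - a j) := mul_comm _ _
        _ ≤ ‖x - a j‖ := lem1 _
        _ ≤ ‖x‖ + ‖a j‖ := norm_sub_le x (a j)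
    have e1 : ∑ i ∈ I, α i * ((‖x‖ - ‖a i‖) / γ₂)
        = A * ‖x‖ / γ₂ - (∑ i ∈ I, α i * ‖a i‖) / γ₂ := by
      rw [hA, Finset.sum_mul, Finset.sum_div, Finset.sum_div, ← Finset.sum_sub_distrib]
      exact Finset.sum_congr rfl fun i _ => by ring
    have e2 : ∑ j ∈ J, β j * ((‖x‖ + ‖a j‖) / γ₁)
        = B * ‖x‖ / γ₁ + (∑ j ∈ J, β j * ‖a j‖) / γ₁ := by
      rw [hB, Finset.sum_mul, Finset.sum_div, Finset.sum_div, ← Finset.sum_add_distrib]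
      exact Finset.sum_congr rfl fun j _ => by ring
    rw [hf]
    have hle : (A * ‖x‖ / γ₂ - (∑ i ∈ I, α i * ‖a i‖) / γ₂)
        - (B * ‖x‖ / γ₁ + (∑ j ∈ J, β j * ‖a j‖) / γ₁)
        ≤ ∑ i ∈ I, α i * gauge F (x - a i) - ∑ j ∈ J, β j * gauge F (x - a j) := by
      rw [← e1, ← e2]
      exact sub_le_sub h1 h2
    have : c * ‖x‖ - C = (A * ‖x‖ / γ₂ - (∑ i ∈ I, α i * ‖a i‖) / γ₂)
        - (B * ‖x‖ / γ₁ + (∑ j ∈ J, β j * ‖a j‖) / γ₁) := by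
      rw [hc, hC]; ring
    exact le_trans (le_of_eq this) hle
  have coercive : ∀ M : ℝ, ∃ R : ℝ, ∀ x : E n, R ≤ ‖x‖ → M ≤ f x := by
    intro M
    refine ⟨max 0 ((M + C) / c), fun x hx => ?_⟩
    have h1 : (M + C) / c ≤ ‖x‖ := le_trans (le_max_right _ _) hx
    have h2 : M + C ≤ c * ‖x‖ := by
      rw [div_le_iff₀ hcpos] at h1; linarith [h1]
    linarith [hmain x]
  refine ⟨coercive, ?_⟩
  -- continuity
  have hfc : Continuous f := by
    rw [hf]
    have hg : Continuous (gauge F) := continuous_gauge hcv hmem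
    exact Continuous.sub
      (continuous_finset_sum _ fun i _ => (continuous_const.mul
        (hg.comp (continuous_id.sub continuous_const))))
      (continuous_finset_sum _ fun j _ => (continuous_const.mul
        (hg.comp (continuous_id.sub continuous_const))))
  obtain ⟨R0, hR0⟩ := coercive (f 0)
  set R1 : ℝ := max R0 0 with hR1
  have hK : IsCompact (Metric.closedBall (0 : E n) R1) := isCompact_closedBall _ _
  have h0K : (0 : E n) ∈ Metric.closedBall (0 : E n) R1 :=
    Metric.mem_closedBall_self (le_max_right R0 0)
  obtain ⟨xstar, hxK, hmin⟩ := hK.exists_isMinOn ⟨0, h0K⟩ hfc.continuousOn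
  refine ⟨xstar, fun x => ?_⟩
  by_cases hx : x ∈ Metric.closedBall (0 : E n) R1
  · exact hmin hx
  · have hxn : R1 ≤ ‖x‖ := by
      rw [Metric.mem_closedBall, dist_zero_right, not_le] at hx
      exact hx.le
    exact le_trans (hmin h0K) (hR0 x (le_trans (le_max_left _ _) hxn))
end
end

section
/- Let Ω¹,...,Ωᵐ ⊂ ℝⁿ be nonempty closed bounded convex sets and k ≥ 1. Then the set clustering objective f(x¹,...,xᵏ) = Σ_{i=1}^m min_{ℓ=1,...,k} [d(xℓ; Ωⁱ)]² attains a global minimum over (ℝⁿ)ᵏ. -/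
noncomputable section

theorem set_clustering_existence {n m k : ℕ} (hk : 0 < k)
    (Ω : Fin m → Set (E n))
    (hne : ∀ i, (Ω i).Nonempty) (hcl : ∀ i, IsClosed (Ω i))
    (hbd : ∀ i, Bornology.IsBounded (Ω i)) (hcv : ∀ i, Convex ℝ (Ω i))
    (f : (Fin k → E n) → ℝ)
    (hf : f = fun X => ∑ i : Fin m, ⨅ ℓ : Fin k, (Metric.infDist (X ℓ) (Ω i)) ^ 2) :
    ∃ Xstar : Fin k → E n, ∀ X : Fin k → E n, f Xstar ≤ f X := by
  haveI : Nonempty (Fin k) := ⟨⟨0, hk⟩⟩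
  rcases Nat.eq_zero_or_pos m with hm | hm
  · subst hm
    refine ⟨fun _ => 0, fun X => ?_⟩
    simp [hf]
  -- bound all Ω i in a ball of radius r
  have hball : ∃ r : ℝ, 0 ≤ r ∧ ∀ i, Ω i ⊆ Metric.closedBall 0 r := by
    choose ρ hρ using fun i => (hbd i).subset_closedBall (0 : E n)
    refine ⟨max 0 (Finset.univ.sup' (Finset.univ_nonempty_iff.2
      ⟨⟨0, hm⟩⟩) ρ), le_max_left _ _, fun i => (hρ i).trans ?_⟩
    exact Metric.closedBall_subset_closedBall
      ((Finset.le_sup' ρ (Finset.mem_univ i)).trans (le_max_right _ _))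
  obtain ⟨r, hr0, hΩr⟩ := hball
  obtain ⟨p, hp⟩ := hne ⟨0, hm⟩
  have hpr : ‖p‖ ≤ r := by simpa using hΩr _ hp
  -- key: far points can be replaced by p without increasing distances
  have hkey : ∀ (x : E n) i, ¬ ‖x‖ ≤ 3 * r →
      Metric.infDist p (Ω i) ≤ Metric.infDist x (Ω i) := by
    intro x i hx
    push_neg at hx
    obtain ⟨q, hq⟩ := hne i
    have hqr : ‖q‖ ≤ r := by simpa using hΩr _ hq
    have h1 : Metric.infDist p (Ω i) ≤ 2 * r :=
      (Metric.infDist_le_dist_of_mem hq).trans (by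
        calc dist p q ≤ ‖p‖ + ‖q‖ := dist_le_norm_add_norm p q
        _ ≤ 2 * r := by linarith)
    have h2 : (2 : ℝ) * r ≤ Metric.infDist x (Ω i) := by
      by_contra hcon
      push_neg at hcon
      obtain ⟨y, hy, hd⟩ := (Metric.infDist_lt_iff (hne i)).1 hcon
      have hyr : ‖y‖ ≤ r := by simpa using hΩr _ hy
      have h3 := norm_sub_norm_le x y
      rw [dist_eq_norm] at hd
      linarith
    linarith
  -- define truncation
  set K : Set (Fin k → E n) := Set.univ.pi fun _ => Metric.closedBall 0 (3 * r) with hK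
  have hKc : IsCompact K := isCompact_univ_pi fun _ => isCompact_closedBall 0 (3 * r)
  have hKne : K.Nonempty := ⟨fun _ => 0, fun ℓ _ => by
    simpa using by positivity⟩
  -- continuity of f
  have hcont : Continuous f := by
    rw [hf]
    refine continuous_finset_sum _ fun i _ => ?_
    have : (fun X : Fin k → E n => ⨅ ℓ : Fin k, (Metric.infDist (X ℓ) (Ω i)) ^ 2)
        = fun X => Finset.univ.inf' Finset.univ_nonempty
          (fun ℓ : Fin k => (Metric.infDist (X ℓ) (Ω i)) ^ 2) := by
      funext X
      rw [Finset.inf'_univ_eq_ciInf]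
    rw [this]
    apply Continuous.finset_inf'_apply
    intro ℓ _
    exact ((Metric.continuous_infDist_pt (Ω i)).comp (continuous_apply ℓ)).pow 2
  obtain ⟨Xstar, hXK, hmin⟩ := hKc.exists_isMinOn hKne hcont.continuousOn
  refine ⟨Xstar, fun X => ?_⟩
  -- truncate X
  set X' : Fin k → E n := fun ℓ => if ‖X ℓ‖ ≤ 3 * r then X ℓ else p with hX'
  have hX'K : X' ∈ K := by
    intro ℓ _
    simp only [hX', Metric.mem_closedBall, dist_zero_right]
    split
    · assumption
    · linarith
  have hle : f X' ≤ f X := by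
    rw [hf]
    refine Finset.sum_le_sum fun i _ => ?_
    refine ciInf_mono ⟨0, fun v hv => ?_⟩ fun ℓ => ?_
    · obtain ⟨ℓ, rfl⟩ := hv
      positivity
    · simp only [hX']
      split_ifs with h
      · exact le_rfl
      · have := hkey (X ℓ) i h
        have h0 : 0 ≤ Metric.infDist p (Ω i) := Metric.infDist_nonneg
        nlinarith [Metric.infDist_nonneg (x := X ℓ) (s := Ω i)]
  exact (hmin hX'K).trans hle
end
end
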